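/- For every real g, the characteristic polynomial of the 7×7 matrix H(g) (defined in the context) equals (x−7)·∏_{k=1}^{3}((x−7)² − k²(4−g²)); equivalently, the eigenvalues of H(g) are 7 and 7 ± k·√(4−g²) for k = 1,2,3 (when g² ≤ 4). -/

import Mathlib

/-!
`H(g)` only couples indices of equal parity, so listing the odd indices before the even ones
turns it into a block-diagonal matrix whose blocks are tridiagonal with antisymmetric couplings:
a `4 × 4` block with diagonal `1, 5, 9, 13` and a `3 × 3` block with diagonal `3, 7, 11`.
Antisymmetry makes each coupling `a` enter the continuant expansion of the characteristic
polynomial as `+a²`, and substituting the couplings of `H(g)` gives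
`((x-7)² - (4-g²))((x-7)² - 9(4-g²))` for the first block and `(x-7)((x-7)² - 4(4-g²))` for the
second.
-/

open Matrix Real Polynomial

noncomputable def Htoy (g : ℝ) : Matrix (Fin 7) (Fin 7) ℝ :=
  !![1, 0, Real.sqrt 3 * g, 0, 0, 0, 0;
     0, 3, 0, Real.sqrt 2 * g, 0, 0, 0;
     -(Real.sqrt 3 * g), 0, 5, 0, 2 * g, 0, 0;
     0, -(Real.sqrt 2 * g), 0, 7, 0, Real.sqrt 2 * g, 0;
     0, 0, -(2 * g), 0, 9, 0, Real.sqrt 3 * g;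
     0, 0, 0, -(Real.sqrt 2 * g), 0, 11, 0;
     0, 0, 0, 0, -(Real.sqrt 3 * g), 0, 13]

namespace Matrix

variable {R : Type*} [CommRing R]

def skewTridiag3 (d₁ d₂ d₃ a b : R) : Matrix (Fin 3) (Fin 3) R :=
  !![d₁, a, 0; -a, d₂, b; 0, -b, d₃]

def skewTridiag4 (d₁ d₂ d₃ d₄ a b c : R) : Matrix (Fin 4) (Fin 4) R :=
  !![d₁, a, 0, 0; -a, d₂, b, 0; 0, -b, d₃, c; 0, 0, -c, d₄]

theorem det_skewTridiag3 (d₁ d₂ d₃ a b : R) :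
    (skewTridiag3 d₁ d₂ d₃ a b).det = d₁ * d₂ * d₃ + a ^ 2 * d₃ + b ^ 2 * d₁ := by
  rw [skewTridiag3, det_fin_three]
  simp only [of_apply, cons_val', cons_val_zero, cons_val_one, cons_val, cons_val_fin_one]
  ring

theorem det_skewTridiag4 (d₁ d₂ d₃ d₄ a b c : R) :
    (skewTridiag4 d₁ d₂ d₃ d₄ a b c).det =
      (d₁ * d₂ + a ^ 2) * (d₃ * d₄ + c ^ 2) + b ^ 2 * d₁ * d₄ := by
  rw [skewTridiag4, det_succ_row_zero]
  simp [Fin.sum_univ_succ, det_fin_three, Fin.succAbove]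
  ring

theorem charmatrix_skewTridiag3 (d₁ d₂ d₃ a b : R) :
    charmatrix (skewTridiag3 d₁ d₂ d₃ a b) =
      skewTridiag3 (X - C d₁) (X - C d₂) (X - C d₃) (-C a) (-C b) := by
  ext i j : 1
  fin_cases i <;> fin_cases j <;> simp [skewTridiag3]

theorem charmatrix_skewTridiag4 (d₁ d₂ d₃ d₄ a b c : R) :
    charmatrix (skewTridiag4 d₁ d₂ d₃ d₄ a b c) =
      skewTridiag4 (X - C d₁) (X - C d₂) (X - C d₃) (X - C d₄) (-C a) (-C b) (-C c) := by
  ext i j : 1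
  fin_cases i <;> fin_cases j <;> simp [skewTridiag4]

theorem charpoly_skewTridiag3 (d₁ d₂ d₃ a b : R) :
    (skewTridiag3 d₁ d₂ d₃ a b).charpoly =
      (X - C d₁) * (X - C d₂) * (X - C d₃) + C (a ^ 2) * (X - C d₃) +
        C (b ^ 2) * (X - C d₁) := by
  simp [charpoly, charmatrix_skewTridiag3, det_skewTridiag3]

theorem charpoly_skewTridiag4 (d₁ d₂ d₃ d₄ a b c : R) :
    (skewTridiag4 d₁ d₂ d₃ d₄ a b c).charpoly =
      ((X - C d₁) * (X - C d₂) + C (a ^ 2)) * ((X - C d₃) * (X - C d₄) + C (c ^ 2)) +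
        C (b ^ 2) * (X - C d₁) * (X - C d₄) := by
  simp [charpoly, charmatrix_skewTridiag4, det_skewTridiag4]

end Matrix

def oddEvenSplit : Fin 4 ⊕ Fin 3 ≃ Fin 7 where
  toFun := Sum.elim ![0, 2, 4, 6] ![1, 3, 5]
  invFun := ![.inl 0, .inr 0, .inl 1, .inr 1, .inl 2, .inr 2, .inl 3]
  left_inv := by decide
  right_inv := by decide

theorem reindex_Htoy (g : ℝ) :
    reindex oddEvenSplit.symm oddEvenSplit.symm (Htoy g) =
      fromBlocks (skewTridiag4 1 5 9 13 (√3 * g) (2 * g) (√3 * g)) 0 0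
        (skewTridiag3 3 7 11 (√2 * g) (√2 * g)) := by
  ext (i | i) (j | j) <;> fin_cases i <;> fin_cases j <;> rfl

theorem stmt_4 (g : ℝ) :
    (Htoy g).charpoly =
      (X - C 7) * ∏ k ∈ Finset.Icc (1 : ℕ) 3,
        ((X - C 7) ^ 2 - C ((k : ℝ) ^ 2 * (4 - g ^ 2))) := by
  rw [← charpoly_reindex oddEvenSplit.symm, reindex_Htoy, charpoly_fromBlocks_zero₁₂,
    charpoly_skewTridiag4, charpoly_skewTridiag3]
  simp only [mul_pow, sq_sqrt (show (0 : ℝ) ≤ 3 by norm_num),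
    sq_sqrt (show (0 : ℝ) ≤ 2 by norm_num)]
  rw [show Finset.Icc (1 : ℕ) 3 = {1, 2, 3} from rfl, Finset.prod_insert (by decide),
    Finset.prod_insert (by decide), Finset.prod_singleton]
  simp only [map_sub, map_mul, map_pow, map_ofNat, Nat.cast_ofNat, Nat.cast_one, one_pow, C_1]
  ring
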